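/- arXiv:1511.00178 — 3 statements merged into one kernel-verified Lean document; each statement's English description precedes it below -/
import Mathlib

section
/- Let μ be a finite measure on a measurable space X, let M > 0, and let f, f_1, f_2, … : X → ℝ be measurable functions with 0 ≤ f_i ≤ M for all i and 0 ≤ f ≤ M. Assume f_i → f weakly in L^1(μ), i.e. ∫_X f_i g dμ → ∫_X f g dμ for every bounded measurable g : X → ℝ. Then liminf_{i→∞} ∫_X f_i log f_i dμ ≥ ∫_X f log f dμ, where the integrand is interpreted with the convention 0·log 0 = 0. -/
/-!
The map `φ(s) = s log s` is convex, so it lies above each of its tangent lines: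
`φ(s) ≥ s (log t + 1) - t` for `t > 0`. For `ε > 0` take the tangent at `t = max f ε`, whose slope
`log (max f ε) + 1` is a bounded measurable test function. Integrating the tangent inequality for
`F i` and passing to the limit by weak convergence gives
`liminf ∫ φ(F i) ≥ ∫ f (log (max f ε) + 1) - max f ε ≥ ∫ φ(f) - ε μ(X)`, and `ε → 0` concludes.
-/

open MeasureTheory Filter Real Topology

namespace Real

lemma mul_log_add_one_sub_le_mul_log {s t : ℝ} (hs : 0 ≤ s) (ht : 0 < t) :
    s * (log t + 1) - t ≤ s * log s := by
  rcases hs.eq_or_lt with rfl | hs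
  · simpa using ht.le
  have h := self_sub_one_le_mul_log (div_nonneg hs.le ht.le)
  rw [log_div hs.ne' ht.ne'] at h
  have h' := mul_le_mul_of_nonneg_left h ht.le
  field_simp at h'
  linarith

lemma mul_log_sub_le_mul_log_max_add_one_sub {s ε : ℝ} (hs : 0 ≤ s) (hε : 0 < ε) :
    s * log s - ε ≤ s * (log (max s ε) + 1) - max s ε := by
  rcases le_total ε s with hεs | hsε
  · rw [max_eq_left hεs]
    linarith
  · rw [max_eq_right hsε]
    rcases hs.eq_or_lt with rfl | hs
    · simp
    nlinarith [log_le_log hs hsε]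

lemma abs_log_max_le {s ε M : ℝ} (hε : 0 < ε) (hs : s ≤ M) :
    |log (max s ε)| ≤ max |log ε| |log (max M ε)| :=
  abs_le_max_abs_abs (log_le_log hε (le_max_right _ _))
    (log_le_log (hε.trans_le (le_max_right _ _)) (max_le_max_right _ hs))

lemma exists_abs_mul_log_le (M : ℝ) : ∃ C, ∀ s, |s| ≤ M → |s * log s| ≤ C := by
  obtain ⟨C, hC⟩ := isCompact_Icc.exists_bound_of_continuousOn
    (continuous_mul_log.continuousOn (s := Set.Icc (-M) M))
  exact ⟨C, fun s hs => hC s (abs_le.mp hs)⟩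

end Real

section

variable {X : Type*} [MeasurableSpace X] (μ : Measure X) [IsFiniteMeasure μ]

lemma integrable_mul_log_of_abs_le {h : X → ℝ} {M : ℝ} (hh : AEStronglyMeasurable h μ)
    (hM : ∀ᵐ x ∂μ, |h x| ≤ M) : Integrable (fun x => h x * log (h x)) μ := by
  obtain ⟨C, hC⟩ := exists_abs_mul_log_le M
  exact .of_bound (continuous_mul_log.comp_aestronglyMeasurable hh) C
    (hM.mono fun x hx => hC _ hx)

lemma isBoundedUnder_le_integral_mul_log {ι : Type*} (l : Filter ι) {F : ι → X → ℝ} {M : ℝ}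
    (hF : ∀ i x, |F i x| ≤ M) :
    IsBoundedUnder (· ≤ ·) l fun i => ∫ x, F i x * log (F i x) ∂μ := by
  obtain ⟨C, hC⟩ := exists_abs_mul_log_le M
  exact isBoundedUnder_of ⟨C * μ.real Set.univ, fun i => (le_norm_self _).trans
    (norm_integral_le_of_norm_le_const (ae_of_all _ fun x => hC _ (hF i x)))⟩

theorem integral_mul_log_sub_le_liminf {ι : Type*} {l : Filter ι} [l.NeBot] {ε M : ℝ}
    (hε : 0 < ε) (f : X → ℝ) (F : ι → X → ℝ)
    (hf_meas : Measurable f) (hF_meas : ∀ i, Measurable (F i))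
    (hf_bd : ∀ x, 0 ≤ f x ∧ f x ≤ M)
    (hF_bd : ∀ i x, 0 ≤ F i x ∧ F i x ≤ M)
    (hweak : ∀ g : X → ℝ, Measurable g → (∃ K : ℝ, ∀ x, |g x| ≤ K) →
      Tendsto (fun i => ∫ x, F i x * g x ∂μ) l (𝓝 (∫ x, f x * g x ∂μ))) :
    ∫ x, f x * log (f x) ∂μ - ε * μ.real Set.univ ≤
      liminf (fun i => ∫ x, F i x * log (F i x) ∂μ) l := by
  set t : X → ℝ := fun x => max (f x) ε
  set g : X → ℝ := fun x => log (t x) + 1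
  have hf_abs : ∀ x, |f x| ≤ M := fun x => (abs_of_nonneg (hf_bd x).1).trans_le (hf_bd x).2
  have hF_abs : ∀ i x, |F i x| ≤ M := fun i x =>
    (abs_of_nonneg (hF_bd i x).1).trans_le (hF_bd i x).2
  have hg_meas : Measurable g := ((hf_meas.max measurable_const).log).add_const 1
  have hg_bd : ∀ x, |g x| ≤ max |log ε| |log (max M ε)| + 1 := fun x =>
    (abs_add_le _ _).trans (by simpa using abs_log_max_le hε (hf_bd x).2)
  have ht_int : Integrable t μ := .of_bound (hf_meas.max measurable_const).aestronglyMeasurable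
    (max M ε) (ae_of_all _ fun x => by
      rw [norm_of_nonneg (hε.le.trans (le_max_right _ _))]
      exact max_le_max_right ε (hf_bd x).2)
  have hmul_g_int {h : X → ℝ} (hh : Measurable h) (hM : ∀ x, |h x| ≤ M) :
      Integrable (fun x => h x * g x) μ :=
    (Integrable.of_bound hh.aestronglyMeasurable M (ae_of_all _ hM)).mul_bdd
      hg_meas.aestronglyMeasurable (ae_of_all _ hg_bd)
  have tangent_le : ∀ i, ∫ x, F i x * g x ∂μ - ∫ x, t x ∂μ ≤ ∫ x, F i x * log (F i x) ∂μ := by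
    intro i
    rw [← integral_sub (hmul_g_int (hF_meas i) (hF_abs i)) ht_int]
    exact integral_mono ((hmul_g_int (hF_meas i) (hF_abs i)).sub ht_int)
      (integrable_mul_log_of_abs_le μ (hF_meas i).aestronglyMeasurable (ae_of_all _ (hF_abs i)))
      fun x => mul_log_add_one_sub_le_mul_log (hF_bd i x).1 (hε.trans_le (le_max_right _ _))
  have le_tangent : ∫ x, f x * log (f x) ∂μ - ε * μ.real Set.univ ≤
      ∫ x, f x * g x ∂μ - ∫ x, t x ∂μ := by
    have hflogf_int :=
      integrable_mul_log_of_abs_le μ hf_meas.aestronglyMeasurable (ae_of_all _ hf_abs)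
    rw [← integral_sub (hmul_g_int hf_meas hf_abs) ht_int, mul_comm, ← smul_eq_mul,
      ← integral_const, ← integral_sub hflogf_int (integrable_const ε)]
    exact integral_mono (hflogf_int.sub (integrable_const ε))
      ((hmul_g_int hf_meas hf_abs).sub ht_int)
      fun x => mul_log_sub_le_mul_log_max_add_one_sub (hf_bd x).1 hε
  have hlim := (hweak g hg_meas ⟨_, hg_bd⟩).sub_const (∫ x, t x ∂μ)
  calc _ ≤ _ := le_tangent
    _ = liminf (fun i => ∫ x, F i x * g x ∂μ - ∫ x, t x ∂μ) l := hlim.liminf_eq.symm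
    _ ≤ _ := liminf_le_liminf (.of_forall tangent_le) hlim.isBoundedUnder_ge
      (isBoundedUnder_le_integral_mul_log μ l hF_abs).isCoboundedUnder_ge

end

theorem entropy_lower_semicontinuous_general
    {X : Type*} [MeasurableSpace X] (μ : Measure X) [IsFiniteMeasure μ]
    (M : ℝ)
    (f : X → ℝ) (F : ℕ → X → ℝ)
    (hf_meas : Measurable f) (hF_meas : ∀ i, Measurable (F i))
    (hf_bd : ∀ x, 0 ≤ f x ∧ f x ≤ M)
    (hF_bd : ∀ i x, 0 ≤ F i x ∧ F i x ≤ M)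
    (hweak : ∀ g : X → ℝ, Measurable g → (∃ K : ℝ, ∀ x, |g x| ≤ K) →
      Tendsto (fun i => ∫ x, F i x * g x ∂μ) atTop (nhds (∫ x, f x * g x ∂μ))) :
    ∫ x, f x * Real.log (f x) ∂μ ≤
      Filter.liminf (fun i => ∫ x, F i x * Real.log (F i x) ∂μ) atTop := by
  have h_error : Tendsto (fun ε => ∫ x, f x * log (f x) ∂μ - ε * μ.real Set.univ) (𝓝[>] 0)
      (𝓝 (∫ x, f x * log (f x) ∂μ)) := by
    have h_id : Tendsto id (𝓝[>] (0 : ℝ)) (𝓝 0) := tendsto_id.mono_left nhdsWithin_le_nhds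
    simpa using tendsto_const_nhds.sub (h_id.mul_const (μ.real Set.univ))
  exact le_of_tendsto h_error (eventually_nhdsWithin_of_forall fun ε hε =>
    integral_mul_log_sub_le_liminf μ hε f F hf_meas hF_meas hf_bd hF_bd hweak)

/-- **Lower semicontinuity of the entropy under weak `L¹` convergence**
(Lemma of Chen–Li–Păun). If `f i` are measurable functions with `0 ≤ f i ≤ M`, converging
weakly in `L¹(μ)` (for a finite measure `μ`) to a function `f` with `0 ≤ f ≤ M`, then
`liminf_i ∫ f i * log (f i) dμ ≥ ∫ f * log f dμ` (with the convention `0 * log 0 = 0`,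
which holds automatically since `Real.log 0 = 0`). -/
theorem entropy_lower_semicontinuous
    {X : Type*} [MeasurableSpace X] (μ : Measure X) [IsFiniteMeasure μ]
    (M : ℝ) (hM : 0 < M)
    (f : X → ℝ) (F : ℕ → X → ℝ)
    (hf_meas : Measurable f) (hF_meas : ∀ i, Measurable (F i))
    (hf_bd : ∀ x, 0 ≤ f x ∧ f x ≤ M)
    (hF_bd : ∀ i x, 0 ≤ F i x ∧ F i x ≤ M)
    (hweak : ∀ g : X → ℝ, Measurable g → (∃ K : ℝ, ∀ x, |g x| ≤ K) →
      Tendsto (fun i => ∫ x, F i x * g x ∂μ) atTop (nhds (∫ x, f x * g x ∂μ))) :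
    ∫ x, f x * Real.log (f x) ∂μ ≤
      Filter.liminf (fun i => ∫ x, F i x * Real.log (F i x) ∂μ) atTop :=
  entropy_lower_semicontinuous_general μ M f F hf_meas hF_meas hf_bd hF_bd hweak
end

section
/- Let 0 < β < 1 and C > 0, and let u : ℂ → ℝ be a measurable function with 0 ≤ u(ζ) ≤ C‖ζ‖^{2β−2} for all ζ ≠ 0. Let ρ : ℂ → ℝ be a nonnegative bounded measurable function supported in the closed unit disk with ∫_ℂ ρ dλ = 1, and for δ > 0 set u_δ(z) = ∫_ℂ u(z − δ w) ρ(w) dλ(w). Then there exists a constant C′, depending only on β, C and sup ρ (and not on δ or z), such that u_δ(z) ≤ C′ δ^{2β−2} for every z ∈ ℂ with ‖z‖ < 3δ. -/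
/-!
Write `z = δa` with `‖a‖ < 3`. Since `z − δw = δ(a − w)`, the bound on `u` gives
`u(z − δw) ρ(w) ≤ C (sup ρ) δ^{2β−2} ‖w − a‖^{2β−2}` for `w ∈ supp ρ ⊆ B̄(0, 1)`, and then
`w − a` stays in the fixed ball `B̄(0, 4)`. The exponent `2β − 2` exceeds `−2 = −dim_ℝ ℂ`, so
`‖v‖^{2β−2}` is integrable on that ball, and by translation invariance of `λ` the integral of
the majorant does not depend on `a`.
-/

open Real MeasureTheory Metric Module

theorem mul_le_indicator_norm_rpow_of_ne {E : Type*} [NormedAddCommGroup E] {p C M r s : ℝ}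
    (hC : 0 ≤ C) {f ρ : E → ℝ} (hf_le : ∀ ζ, ζ ≠ 0 → f ζ ≤ C * ‖ζ‖ ^ p)
    (hρ_nonneg : ∀ w, 0 ≤ ρ w) (hρ_le : ∀ w, ρ w ≤ M)
    (hρ_supp : Function.support ρ ⊆ closedBall 0 r) {a w : E} (ha : ‖a‖ ≤ s) (hw : w ≠ a) :
    f (a - w) * ρ w ≤ C * M * (closedBall 0 (r + s)).indicator (fun v => ‖v‖ ^ p) (w - a) := by
  have hM : 0 ≤ M := (hρ_nonneg 0).trans (hρ_le 0)
  by_cases hρw : ρ w = 0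
  · rw [hρw, mul_zero]
    exact mul_nonneg (mul_nonneg hC hM)
      (Set.indicator_nonneg (fun v _ => by positivity) _)
  have hw_mem : w - a ∈ closedBall (0 : E) (r + s) := by
    have hw_r : ‖w‖ ≤ r := by simpa using hρ_supp hρw
    rw [mem_closedBall_zero_iff]
    exact (norm_sub_le w a).trans (add_le_add hw_r ha)
  rw [Set.indicator_of_mem hw_mem, norm_sub_rev]
  calc f (a - w) * ρ w ≤ (C * ‖a - w‖ ^ p) * M :=
        mul_le_mul (hf_le _ (sub_ne_zero.mpr hw.symm)) (hρ_le w) (hρ_nonneg w) (by positivity)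
    _ = C * M * ‖a - w‖ ^ p := by ring

section NormRpowMajorant

variable {E : Type*} [NormedAddCommGroup E] [NormedSpace ℝ E] [FiniteDimensional ℝ E]
  [Nontrivial E] [MeasurableSpace E] [BorelSpace E] {μ : Measure E} [μ.IsAddHaarMeasure]

theorem locallyIntegrable_norm_rpow {p : ℝ} (hp : -(finrank ℝ E : ℝ) < p) :
    LocallyIntegrable (fun x : E => ‖x‖ ^ p) μ := by
  refine locallyIntegrable_of_norm_le_rpow (C := 1) (α := -p) Module.finrank_pos
    (by linarith) (ae_of_all _ fun x => ?_) (measurable_norm.pow_const p).aestronglyMeasurable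
  rw [neg_neg, one_mul, norm_of_nonneg (by positivity)]

theorem integral_comp_sub_mul_le_of_le_norm_rpow {p C M r s : ℝ}
    (hp : -(finrank ℝ E : ℝ) < p) (hC : 0 ≤ C) {f ρ : E → ℝ}
    (hf_nonneg : ∀ ζ, 0 ≤ f ζ) (hf_le : ∀ ζ, ζ ≠ 0 → f ζ ≤ C * ‖ζ‖ ^ p)
    (hρ_nonneg : ∀ w, 0 ≤ ρ w) (hρ_le : ∀ w, ρ w ≤ M)
    (hρ_supp : Function.support ρ ⊆ closedBall 0 r) {a : E} (ha : ‖a‖ ≤ s) :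
    ∫ w, f (a - w) * ρ w ∂μ ≤ C * M * ∫ v in closedBall (0 : E) (r + s), ‖v‖ ^ p ∂μ := by
  set g := (closedBall (0 : E) (r + s)).indicator fun v => ‖v‖ ^ p
  have hg : Integrable g μ :=
    (integrable_indicator_iff measurableSet_closedBall).2
      ((locallyIntegrable_norm_rpow hp).integrableOn_isCompact (isCompact_closedBall _ _))
  have hbound : ∀ᵐ w ∂μ, f (a - w) * ρ w ≤ C * M * g (w - a) := by
    filter_upwards [compl_mem_ae_iff.mpr (measure_singleton (μ := μ) a)] with w hw
    exact mul_le_indicator_norm_rpow_of_ne hC hf_le hρ_nonneg hρ_le hρ_supp ha hw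
  calc ∫ w, f (a - w) * ρ w ∂μ ≤ ∫ w, C * M * g (w - a) ∂μ :=
        integral_mono_of_nonneg (ae_of_all _ fun w => mul_nonneg (hf_nonneg _) (hρ_nonneg w))
          ((hg.comp_sub_right a).const_mul _) hbound
    _ = C * M * ∫ v in closedBall (0 : E) (r + s), ‖v‖ ^ p ∂μ := by
        rw [integral_const_mul, integral_sub_right_eq_self g a,
          integral_indicator measurableSet_closedBall]

end NormRpowMajorant

theorem mollified_conic_density_near_divisor_general
    (β C : ℝ) (hβ0 : 0 < β) (hC : 0 < C)
    (u : ℂ → ℝ) (hu_nonneg : ∀ ζ, 0 ≤ u ζ)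
    (hu_bd : ∀ ζ : ℂ, ζ ≠ 0 → u ζ ≤ C * ‖ζ‖ ^ (2 * β - 2))
    (ρ : ℂ → ℝ) (hρ_nonneg : ∀ w, 0 ≤ ρ w)
    (hρ_bd : ∃ M : ℝ, ∀ w, ρ w ≤ M)
    (hρ_supp : Function.support ρ ⊆ Metric.closedBall (0 : ℂ) 1) :
    ∃ C' : ℝ, ∀ δ : ℝ, 0 < δ → ∀ z : ℂ, ‖z‖ < 3 * δ →
      (∫ w : ℂ, u (z - δ • w) * ρ w) ≤ C' * δ ^ (2 * β - 2) := by
  obtain ⟨M, hM⟩ := hρ_bd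
  set p := 2 * β - 2
  have hp : -(finrank ℝ ℂ : ℝ) < p := by
    rw [Complex.finrank_real_complex]; push_cast; linarith
  refine ⟨C * M * ∫ v in closedBall (0 : ℂ) (1 + 3), ‖v‖ ^ p, fun δ hδ z hz => ?_⟩
  set a := δ⁻¹ • z
  have ha : ‖a‖ ≤ 3 := by
    rw [norm_smul, norm_inv, norm_of_nonneg hδ.le, inv_mul_le_iff₀ hδ]; linarith
  have hz_sub : ∀ w : ℂ, z - δ • w = δ • (a - w) := fun w => by
    rw [smul_sub, smul_inv_smul₀ hδ.ne']
  have hu_scaled : ∀ ζ : ℂ, ζ ≠ 0 → u (δ • ζ) ≤ C * δ ^ p * ‖ζ‖ ^ p := fun ζ hζ => by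
    calc u (δ • ζ) ≤ C * ‖δ • ζ‖ ^ p := hu_bd _ (smul_ne_zero hδ.ne' hζ)
      _ = C * δ ^ p * ‖ζ‖ ^ p := by
        rw [norm_smul, norm_of_nonneg hδ.le, mul_rpow hδ.le (norm_nonneg ζ), mul_assoc]
  simp_rw [hz_sub]
  calc ∫ w : ℂ, u (δ • (a - w)) * ρ w
      ≤ C * δ ^ p * M * ∫ v in closedBall (0 : ℂ) (1 + 3), ‖v‖ ^ p :=
        integral_comp_sub_mul_le_of_le_norm_rpow hp (by positivity) (fun ζ => hu_nonneg _)
          hu_scaled hρ_nonneg hM hρ_supp ha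
    _ = _ := by ring

/-- **Growth of the mollified conic density near the divisor** (part (a) of the paper's
Lemma on growth control of the smoothed geodesic). If `0 ≤ u(ζ) ≤ C‖ζ‖^{2β−2}` for `ζ ≠ 0`
and `u_δ(z) = ∫ u(z − δw) ρ(w) dλ(w)` is the δ-mollification of `u` by a kernel `ρ`
supported in the closed unit disk, then there is a constant `C′` (independent of `δ` and of
the point) such that `u_δ(z) ≤ C′ δ^{2β−2}` whenever `‖z‖ < 3δ`. -/
theorem mollified_conic_density_near_divisor
    (β C : ℝ) (hβ0 : 0 < β) (hβ1 : β < 1) (hC : 0 < C)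
    (u : ℂ → ℝ) (hu_meas : Measurable u) (hu_nonneg : ∀ ζ, 0 ≤ u ζ)
    (hu_bd : ∀ ζ : ℂ, ζ ≠ 0 → u ζ ≤ C * ‖ζ‖ ^ (2 * β - 2))
    (ρ : ℂ → ℝ) (hρ_meas : Measurable ρ) (hρ_nonneg : ∀ w, 0 ≤ ρ w)
    (hρ_bd : ∃ M : ℝ, ∀ w, ρ w ≤ M)
    (hρ_supp : Function.support ρ ⊆ Metric.closedBall (0 : ℂ) 1)
    (hρ_int : ∫ w : ℂ, ρ w = 1) :
    ∃ C' : ℝ, ∀ δ : ℝ, 0 < δ → ∀ z : ℂ, ‖z‖ < 3 * δ →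
      (∫ w : ℂ, u (z - δ • w) * ρ w) ≤ C' * δ ^ (2 * β - 2) :=
  mollified_conic_density_near_divisor_general β C hβ0 hC u hu_nonneg hu_bd ρ hρ_nonneg hρ_bd
    hρ_supp
end

section
/- Let 0 < β < 1 and C > 0, and let u : ℂ → ℝ be a measurable function with 0 ≤ u(ζ) ≤ C‖ζ‖^{2β−2} for all ζ ≠ 0. Let ρ : ℂ → ℝ be a nonnegative bounded measurable function supported in the closed unit disk with ∫_ℂ ρ dλ = 1, and for δ > 0 set u_δ(z) = ∫_ℂ u(z − δ w) ρ(w) dλ(w). Then there exists a constant C′, depending only on β and C (and not on δ or z), such that u_δ(z) ≤ C′ (‖z‖² + δ²)^{β−1} for every z ∈ ℂ with ‖z‖ ≥ 3δ. -/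
open Filter Real MeasureTheory

/-! On the support of `ρ` the point `z - δ • w` stays at distance at least `‖z‖ - δ ≥ 2‖z‖/3`
from the origin, so `‖z - δ • w‖² ≥ (‖z‖² + δ²)/9`. Since `2β - 2 < 0`, the bound on `u` turns
this into `u (z - δ • w) ≤ C ((‖z‖² + δ²)/9)^{β-1}` there, and integrating against the
probability density `ρ` gives the claim with `C' = C / 9^{β-1}`. -/

theorem sq_add_sq_div_nine_le_norm_sub_smul_sq {E : Type*} [SeminormedAddCommGroup E]
    [NormedSpace ℝ E] {δ : ℝ} {z w : E} (hδ : 0 ≤ δ) (hw : ‖w‖ ≤ 1) (hz : 3 * δ ≤ ‖z‖) :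
    (‖z‖ ^ 2 + δ ^ 2) / 9 ≤ ‖z - δ • w‖ ^ 2 := by
  have hδw : ‖δ • w‖ ≤ δ := by
    rw [norm_smul, Real.norm_of_nonneg hδ]
    exact mul_le_of_le_one_right hδ hw
  have hlower : ‖z‖ - δ ≤ ‖z - δ • w‖ := by
    linarith [norm_sub_norm_le z (δ • w)]
  nlinarith [norm_nonneg (z - δ • w)]

theorem Real.rpow_two_mul_le_of_le_sq {x a s : ℝ} (hx : 0 ≤ x) (ha : 0 < a) (hs : s ≤ 0)
    (hax : a ≤ x ^ 2) : x ^ (2 * s) ≤ a ^ s := by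
  rw [Real.rpow_mul hx, Real.rpow_two]
  exact Real.rpow_le_rpow_of_nonpos ha hax hs

theorem MeasureTheory.integral_mul_le_of_le_on_support {α : Type*} [MeasurableSpace α]
    {μ : Measure α} {f g : α → ℝ} {K : ℝ} (hf : ∀ x, 0 ≤ f x) (hg : ∀ x, 0 ≤ g x)
    (hg_one : ∫ x, g x ∂μ = 1) (hfK : ∀ x ∈ Function.support g, f x ≤ K) :
    ∫ x, f x * g x ∂μ ≤ K := by
  have hle : ∀ x, f x * g x ≤ K * g x := by
    intro x
    by_cases hx : g x = 0
    · simp [hx]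
    · exact mul_le_mul_of_nonneg_right (hfK x hx) (hg x)
  calc ∫ x, f x * g x ∂μ ≤ ∫ x, K * g x ∂μ :=
        integral_mono_of_nonneg (.of_forall fun x => mul_nonneg (hf x) (hg x))
          ((integrable_of_integral_eq_one hg_one).const_mul K) (.of_forall hle)
    _ = K := by rw [integral_const_mul, hg_one, mul_one]

theorem mollified_conic_density_far_from_divisor_general
    (β C : ℝ) (hβ1 : β < 1) (hC : 0 < C)
    (u : ℂ → ℝ) (hu_nonneg : ∀ ζ, 0 ≤ u ζ)
    (hu_bd : ∀ ζ : ℂ, ζ ≠ 0 → u ζ ≤ C * ‖ζ‖ ^ (2 * β - 2))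
    (ρ : ℂ → ℝ) (hρ_nonneg : ∀ w, 0 ≤ ρ w)
    (hρ_supp : Function.support ρ ⊆ Metric.closedBall (0 : ℂ) 1)
    (hρ_int : ∫ w : ℂ, ρ w = 1) :
    ∃ C' : ℝ, ∀ δ : ℝ, 0 < δ → ∀ z : ℂ, 3 * δ ≤ ‖z‖ →
      (∫ w : ℂ, u (z - δ • w) * ρ w) ≤ C' * (‖z‖ ^ 2 + δ ^ 2) ^ (β - 1) := by
  refine ⟨C / 9 ^ (β - 1), fun δ hδ z hz => ?_⟩
  have hX : 0 < (‖z‖ ^ 2 + δ ^ 2) / 9 := by positivity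
  refine integral_mul_le_of_le_on_support (fun _ => hu_nonneg _) hρ_nonneg hρ_int fun w hw => ?_
  have hsq := sq_add_sq_div_nine_le_norm_sub_smul_sq hδ.le (by simpa using hρ_supp hw) hz
  have hne : z - δ • w ≠ 0 := by
    rintro h
    rw [h, norm_zero] at hsq
    linarith
  calc u (z - δ • w) ≤ C * ‖z - δ • w‖ ^ (2 * (β - 1)) := by
        rw [mul_sub_one]
        exact hu_bd _ hne
    _ ≤ C * ((‖z‖ ^ 2 + δ ^ 2) / 9) ^ (β - 1) := by
        gcongr
        exact rpow_two_mul_le_of_le_sq (norm_nonneg _) hX (by linarith) hsq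
    _ = C / 9 ^ (β - 1) * (‖z‖ ^ 2 + δ ^ 2) ^ (β - 1) := by
        rw [div_rpow (by positivity) (by norm_num)]
        ring

/-- **Growth of the mollified conic density away from the divisor** (part (b) of the paper's
Lemma on growth control of the smoothed geodesic). If `0 ≤ u(ζ) ≤ C‖ζ‖^{2β−2}` for `ζ ≠ 0`
and `u_δ(z) = ∫ u(z − δw) ρ(w) dλ(w)` is the δ-mollification of `u` by a kernel `ρ`
supported in the closed unit disk, then there is a constant `C′` (independent of `δ` and of
the point) such that `u_δ(z) ≤ C′ (‖z‖² + δ²)^{β−1}` whenever `‖z‖ ≥ 3δ`. -/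
theorem mollified_conic_density_far_from_divisor
    (β C : ℝ) (hβ0 : 0 < β) (hβ1 : β < 1) (hC : 0 < C)
    (u : ℂ → ℝ) (hu_meas : Measurable u) (hu_nonneg : ∀ ζ, 0 ≤ u ζ)
    (hu_bd : ∀ ζ : ℂ, ζ ≠ 0 → u ζ ≤ C * ‖ζ‖ ^ (2 * β - 2))
    (ρ : ℂ → ℝ) (hρ_meas : Measurable ρ) (hρ_nonneg : ∀ w, 0 ≤ ρ w)
    (hρ_bd : ∃ M : ℝ, ∀ w, ρ w ≤ M)
    (hρ_supp : Function.support ρ ⊆ Metric.closedBall (0 : ℂ) 1)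
    (hρ_int : ∫ w : ℂ, ρ w = 1) :
    ∃ C' : ℝ, ∀ δ : ℝ, 0 < δ → ∀ z : ℂ, 3 * δ ≤ ‖z‖ →
      (∫ w : ℂ, u (z - δ • w) * ρ w) ≤ C' * (‖z‖ ^ 2 + δ ^ 2) ^ (β - 1) :=
  mollified_conic_density_far_from_divisor_general β C hβ1 hC u hu_nonneg hu_bd ρ hρ_nonneg hρ_supp
    hρ_int
end
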